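/- arXiv:nlin/0609019 — 3 statements merged into one kernel-verified Lean document; each statement's English description precedes it below -/
import Mathlib

section
/- Let α₁ < α₂ < α₃ be real parameters, φ(λ) = (λ−α₁)(λ−α₂)(λ−α₃), and let x ∈ ℝ³ satisfy x_j ≠ 0 for j = 1, 2, 3; write a² = |x|². Then there exist unique real numbers u₁, u₂ with α₁ < u₁ < α₂ < u₂ < α₃ such that Σ_{j=1}^{3} x_j²/(u_i − α_j) = 0 for i = 1, 2, and moreover for every λ ∉ {α₁, α₂, α₃} one has the identity Σ_{j=1}^{3} x_j²/(λ − α_j) = a² (λ − u₁)(λ − u₂)/φ(λ). -/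
/-!
Statement 5: existence and uniqueness of the elliptic coordinates `u₁, u₂` on
the sphere with parameters `α₁ < α₂ < α₃`, together with the factorization
`Σ_j x_j²/(λ − α_j) = a² (λ − u₁)(λ − u₂)/φ(λ)`.
-/

/-- A quadratic with leading coefficient `A ≠ 0` and two distinct roots
factors completely. -/
lemma quad_factor_aux (A B C u v : ℝ) (huv : u ≠ v)
    (hu : A * u ^ 2 + B * u + C = 0) (hv : A * v ^ 2 + B * v + C = 0) :
    ∀ t : ℝ, A * t ^ 2 + B * t + C = A * (t - u) * (t - v) := by
  have h1 : (u - v) * (B + A * (u + v)) = 0 := by linear_combination hu - hv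
  have hB : B = -A * (u + v) := by
    rcases mul_eq_zero.1 h1 with h | h
    · exact absurd (sub_eq_zero.1 h) huv
    · linarith
  have hC : C = A * (u * v) := by linear_combination hu - u ^ 2 * (by ring : A = A) - (by linear_combination hB : B = -A*(u+v)) * u
  intro t
  rw [hB, hC]; ring

/-- Let `α₁ < α₂ < α₃`, let `x_j ≠ 0` for `j = 1,2,3`, and
`a² = |x|²`.  Then there are unique `u₁, u₂` with `α₁ < u₁ < α₂ < u₂ < α₃`
which are roots of `e(λ) = Σ_j x_j²/(λ − α_j) = 0`, and for every
`λ ∉ {α₁, α₂, α₃}` one has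
`Σ_j x_j²/(λ − α_j) = a² (λ − u₁)(λ − u₂)/((λ−α₁)(λ−α₂)(λ−α₃))`. -/
theorem elliptic_coordinates_exist_unique
    (α₁ α₂ α₃ x₁ x₂ x₃ a : ℝ)
    (h12 : α₁ < α₂) (h23 : α₂ < α₃)
    (hx₁ : x₁ ≠ 0) (hx₂ : x₂ ≠ 0) (hx₃ : x₃ ≠ 0)
    (ha : x₁ ^ 2 + x₂ ^ 2 + x₃ ^ 2 = a ^ 2) :
    ∃! u : ℝ × ℝ,
      (α₁ < u.1 ∧ u.1 < α₂ ∧ α₂ < u.2 ∧ u.2 < α₃) ∧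
      (x₁ ^ 2 / (u.1 - α₁) + x₂ ^ 2 / (u.1 - α₂) + x₃ ^ 2 / (u.1 - α₃) = 0) ∧
      (x₁ ^ 2 / (u.2 - α₁) + x₂ ^ 2 / (u.2 - α₂) + x₃ ^ 2 / (u.2 - α₃) = 0) ∧
      (∀ lam : ℝ, lam ≠ α₁ → lam ≠ α₂ → lam ≠ α₃ →
        x₁ ^ 2 / (lam - α₁) + x₂ ^ 2 / (lam - α₂) + x₃ ^ 2 / (lam - α₃) =
          a ^ 2 * (lam - u.1) * (lam - u.2) /
            ((lam - α₁) * (lam - α₂) * (lam - α₃))) := by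
  have hx1p : 0 < x₁ ^ 2 := by positivity
  have hx2p : 0 < x₂ ^ 2 := by positivity
  have hx3p : 0 < x₃ ^ 2 := by positivity
  have ha2 : 0 < a ^ 2 := by nlinarith
  set f : ℝ → ℝ := fun t =>
    x₁ ^ 2 * (t - α₂) * (t - α₃) + x₂ ^ 2 * (t - α₁) * (t - α₃) +
      x₃ ^ 2 * (t - α₁) * (t - α₂) with hf
  have hcont : Continuous f := by fun_prop
  have hfa1 : 0 < f α₁ := by
    have : f α₁ = x₁ ^ 2 * (α₁ - α₂) * (α₁ - α₃) := by simp [hf]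
    rw [this]
    nlinarith [mul_pos (mul_pos hx1p (sub_pos.2 h12)) (sub_pos.2 (h12.trans h23))]
  have hfa2 : f α₂ < 0 := by
    have : f α₂ = x₂ ^ 2 * (α₂ - α₁) * (α₂ - α₃) := by simp [hf]
    rw [this]
    nlinarith [mul_pos (mul_pos hx2p (sub_pos.2 h12)) (sub_pos.2 h23)]
  have hfa3 : 0 < f α₃ := by
    have : f α₃ = x₃ ^ 2 * (α₃ - α₁) * (α₃ - α₂) := by simp [hf]
    rw [this]
    nlinarith [mul_pos (mul_pos hx3p (sub_pos.2 (h12.trans h23))) (sub_pos.2 h23)]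
  obtain ⟨u₁, hu₁mem, hu₁⟩ :=
    intermediate_value_Ioo' h12.le hcont.continuousOn (⟨hfa2, hfa1⟩ : (0:ℝ) ∈ Set.Ioo (f α₂) (f α₁))
  obtain ⟨u₂, hu₂mem, hu₂⟩ :=
    intermediate_value_Ioo h23.le hcont.continuousOn (⟨hfa2, hfa3⟩ : (0:ℝ) ∈ Set.Ioo (f α₂) (f α₃))
  obtain ⟨h1u, hu2⟩ := hu₁mem
  obtain ⟨h2u, hu3⟩ := hu₂mem
  have hne : u₁ ≠ u₂ := ne_of_lt (hu2.trans h2u)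
  -- quadratic factorization
  have hquad : ∀ t : ℝ,
      x₁ ^ 2 * (t - α₂) * (t - α₃) + x₂ ^ 2 * (t - α₁) * (t - α₃) +
        x₃ ^ 2 * (t - α₁) * (t - α₂) = a ^ 2 * (t - u₁) * (t - u₂) := by
    have hform : ∀ t : ℝ,
        x₁ ^ 2 * (t - α₂) * (t - α₃) + x₂ ^ 2 * (t - α₁) * (t - α₃) +
          x₃ ^ 2 * (t - α₁) * (t - α₂) =
        a ^ 2 * t ^ 2 +
          (-(x₁ ^ 2 * (α₂ + α₃) + x₂ ^ 2 * (α₁ + α₃) + x₃ ^ 2 * (α₁ + α₂))) * t +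
          (x₁ ^ 2 * (α₂ * α₃) + x₂ ^ 2 * (α₁ * α₃) + x₃ ^ 2 * (α₁ * α₂)) := by
      intro t; linear_combination t ^ 2 * ha
    have h1 := (hform u₁).symm.trans hu₁
    have h2 := (hform u₂).symm.trans hu₂
    have := quad_factor_aux (a ^ 2)
      (-(x₁ ^ 2 * (α₂ + α₃) + x₂ ^ 2 * (α₁ + α₃) + x₃ ^ 2 * (α₁ + α₂)))
      (x₁ ^ 2 * (α₂ * α₃) + x₂ ^ 2 * (α₁ * α₃) + x₃ ^ 2 * (α₁ * α₂)) u₁ u₂ hne h1 h2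
    intro t
    rw [hform t, this t]
  have hd11 : u₁ - α₁ ≠ 0 := sub_ne_zero.2 (ne_of_gt h1u)
  have hd12 : u₁ - α₂ ≠ 0 := sub_ne_zero.2 (ne_of_lt hu2)
  have hd13 : u₁ - α₃ ≠ 0 := sub_ne_zero.2 (ne_of_lt (hu2.trans h23))
  have hd21 : u₂ - α₁ ≠ 0 := sub_ne_zero.2 (ne_of_gt (h12.trans h2u))
  have hd22 : u₂ - α₂ ≠ 0 := sub_ne_zero.2 (ne_of_gt h2u)
  have hd23 : u₂ - α₃ ≠ 0 := sub_ne_zero.2 (ne_of_lt hu3)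
  refine ⟨(u₁, u₂), ⟨⟨h1u, hu2, h2u, hu3⟩, ?_, ?_, ?_⟩, ?_⟩
  · field_simp
    linear_combination hu₁
  · field_simp
    linear_combination hu₂
  · intro lam hl1 hl2 hl3
    have e1 : lam - α₁ ≠ 0 := sub_ne_zero.2 hl1
    have e2 : lam - α₂ ≠ 0 := sub_ne_zero.2 hl2
    have e3 : lam - α₃ ≠ 0 := sub_ne_zero.2 hl3
    field_simp
    linear_combination hquad lam
  · rintro ⟨v₁, v₂⟩ ⟨⟨g1, g2, g3, g4⟩, ge1, ge2, -⟩
    simp only at g1 g2 g3 g4 ge1 ge2 ⊢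
    have k11 : v₁ - α₁ ≠ 0 := sub_ne_zero.2 (ne_of_gt g1)
    have k12 : v₁ - α₂ ≠ 0 := sub_ne_zero.2 (ne_of_lt g2)
    have k13 : v₁ - α₃ ≠ 0 := sub_ne_zero.2 (ne_of_lt (g2.trans h23))
    have k21 : v₂ - α₁ ≠ 0 := sub_ne_zero.2 (ne_of_gt (h12.trans g3))
    have k22 : v₂ - α₂ ≠ 0 := sub_ne_zero.2 (ne_of_gt g3)
    have k23 : v₂ - α₃ ≠ 0 := sub_ne_zero.2 (ne_of_lt g4)
    have hv1 : a ^ 2 * (v₁ - u₁) * (v₁ - u₂) = 0 := by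
      field_simp at ge1
      linear_combination (hquad v₁).symm + ge1
    have hv2 : a ^ 2 * (v₂ - u₁) * (v₂ - u₂) = 0 := by
      field_simp at ge2
      linear_combination (hquad v₂).symm + ge2
    have hv1' : v₁ = u₁ := by
      rcases mul_eq_zero.1 hv1 with h | h
      · rcases mul_eq_zero.1 h with h | h
        · exact absurd h ha2.ne'
        · exact sub_eq_zero.1 h
      · exfalso
        have : v₁ < u₂ := g2.trans h2u
        have := sub_eq_zero.1 h
        linarith
    have hv2' : v₂ = u₂ := by
      rcases mul_eq_zero.1 hv2 with h | h
      · rcases mul_eq_zero.1 h with h | h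
        · exact absurd h ha2.ne'
        · exfalso
          have : u₁ < v₂ := hu2.trans g3
          have := sub_eq_zero.1 h
          linarith
      · exact sub_eq_zero.1 h
    exact Prod.ext hv1' hv2'
end

section
/- Let α₁ < α₂ < α₃ be real, a > 0, and let V ⊆ {x ∈ ℝ³ : x₁x₂x₃ ≠ 0} be open. Suppose u₁, u₂ : V → ℝ are continuously differentiable with α₁ < u₁(x) < α₂ < u₂(x) < α₃ and Σ_{j=1}^{3} x_j²/(u_i(x) − α_j) = 0 on V for i = 1, 2. Define π_i⁰(x, J) = (1/(2a²)) Σ_{j=1}^{3} x_j (x ∧ J)_j / (u_i(x) − α_j) on V × ℝ³. Then, viewing u₁, u₂ also as functions on V × ℝ³ independent of J, the e(3) Lie-Poisson bracket satisfies {u₁, u₂} = 0 everywhere on V × ℝ³, and {π_i⁰, u_j} = δ_{ij} at every point (x, J) ∈ V × ℝ³ with |x|² = a². -/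
/-- Points of `e*(3)`: the first component is `x`, the second is `J`. -/
abbrev E3 : Type := (Fin 3 → ℝ) × (Fin 3 → ℝ)

/-- The totally antisymmetric symbol `ε_{ijk}` with `ε_{012} = 1`. -/
noncomputable def eps (i j k : Fin 3) : ℝ :=
  (((j : ℕ) : ℝ) - ((i : ℕ) : ℝ)) * (((k : ℕ) : ℝ) - ((j : ℕ) : ℝ)) *
    (((k : ℕ) : ℝ) - ((i : ℕ) : ℝ)) / 2

/-- Partial derivative in the `x`-variable: `∂F/∂x_i`. -/
noncomputable def dX (F : E3 → ℝ) (i : Fin 3) (p : E3) : ℝ :=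
  fderiv ℝ F p (Pi.single i 1, 0)

/-- Partial derivative in the `J`-variable: `∂F/∂J_i`. -/
noncomputable def dJ (F : E3 → ℝ) (i : Fin 3) (p : E3) : ℝ :=
  fderiv ℝ F p (0, Pi.single i 1)

/-- The Lie–Poisson bracket on `e*(3)`. -/
noncomputable def liePoisson (F G : E3 → ℝ) (p : E3) : ℝ :=
  ∑ i, ∑ j, ∑ k, eps i j k *
    (p.2 k * dJ F i p * dJ G j p + p.1 k * dJ F i p * dX G j p +
      p.1 k * dX F i p * dJ G j p)

/-- The standard euclidean cross product in `ℝ³`. -/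
def cross (u v : Fin 3 → ℝ) : Fin 3 → ℝ :=
  ![u 1 * v 2 - u 2 * v 1, u 2 * v 0 - u 0 * v 2, u 0 * v 1 - u 1 * v 0]

/-- The momentum `π_i⁰(x,J) = (1/(2a²)) Σ_j x_j (x ∧ J)_j/(u_i(x) − α_j)`. -/
noncomputable def pi0 (α : Fin 3 → ℝ) (a : ℝ) (u : (Fin 3 → ℝ) → ℝ)
    (p : E3) : ℝ :=
  (1 / (2 * a ^ 2)) * ∑ j, p.1 j * cross p.1 p.2 j / (u p.1 - α j)

/-!
Since `u_j` does not depend on `J`, the bracket `{F, u_j}` is the triple product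
`(∇_J F × ∇u_j) · x`, which vanishes when `F = u_i` as well. The momentum `π_i⁰` is linear in `J`
with `∇_J π_i⁰ = (w × x) / (2a²)`, where `w_m = x_m / (u_i − α_m)`; by the Binet–Cauchy identity,
`w · x = e(u_i) = 0` and `|x|² = a²`, this gives `{π_i⁰, u_j} = (w · ∇u_j) / 2`. Differentiating
`e(u_j(x)) = 0` implicitly gives `∇u_j = 2 (x_m / (u_j − α_m))_m / Σ_m x_m² / (u_j − α_m)²`, so
`w · ∇u_j` is twice `Σ_m x_m² / ((u_i − α_m)(u_j − α_m))` divided by `Σ_m x_m² / (u_j − α_m)²`: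
for `i = j` the two sums agree, and for `i ≠ j` the partial fraction decomposition turns the
numerator into `(e(u_j) − e(u_i)) / (u_i − u_j) = 0`.
-/

open Matrix Filter Topology

theorem cross_eq_crossProduct (u v : Fin 3 → ℝ) : cross u v = u ⨯₃ v := rfl

theorem sum_eps_mul_eq_cross_dotProduct (a b c : Fin 3 → ℝ) :
    ∑ i, ∑ j, ∑ k, eps i j k * (c k * a i * b j) = a ⨯₃ b ⬝ᵥ c := by
  simp only [Fin.sum_univ_three, eps, vec3_dotProduct, cross_apply, Fin.isValue, Fin.val_zero,
    Fin.val_one, Fin.val_two, Nat.cast_zero, Nat.cast_one, Nat.cast_ofNat, cons_val_zero,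
    cons_val_one, cons_val_two, tail_cons, head_cons]
  ring

section FunctionOfX

variable {f : (Fin 3 → ℝ) → ℝ} {p : E3}

theorem hasFDerivAt_comp_fst (hf : DifferentiableAt ℝ f p.1) :
    HasFDerivAt (fun q : E3 => f q.1)
      ((fderiv ℝ f p.1).comp (ContinuousLinearMap.fst ℝ _ _)) p :=
  hf.hasFDerivAt.comp p hasFDerivAt_fst

theorem dJ_comp_fst (hf : DifferentiableAt ℝ f p.1) (i : Fin 3) :
    dJ (fun q => f q.1) i p = 0 := by
  simp [dJ, (hasFDerivAt_comp_fst hf).fderiv]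

theorem dX_comp_fst (hf : DifferentiableAt ℝ f p.1) (i : Fin 3) :
    dX (fun q => f q.1) i p = fderiv ℝ f p.1 (Pi.single i 1) := by
  simp [dX, (hasFDerivAt_comp_fst hf).fderiv]

theorem liePoisson_comp_fst (F : E3 → ℝ) (hf : DifferentiableAt ℝ f p.1) :
    liePoisson F (fun q => f q.1) p =
      (fun i => dJ F i p) ⨯₃ (fun j => fderiv ℝ f p.1 (Pi.single j 1)) ⬝ᵥ p.1 := by
  simp only [liePoisson, dJ_comp_fst hf, dX_comp_fst hf, mul_zero, zero_add, add_zero]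
  exact sum_eps_mul_eq_cross_dotProduct _ _ _

theorem liePoisson_comp_fst_comp_fst {g : (Fin 3 → ℝ) → ℝ} (hf : DifferentiableAt ℝ f p.1)
    (hg : DifferentiableAt ℝ g p.1) :
    liePoisson (fun q => f q.1) (fun q => g q.1) p = 0 := by
  have hJ : (fun i => dJ (fun q => f q.1) i p) = 0 := funext (dJ_comp_fst hf)
  rw [liePoisson_comp_fst _ hg, hJ, map_zero, LinearMap.zero_apply, zero_dotProduct]

end FunctionOfX

theorem dJ_eq_fderiv_snd {F : E3 → ℝ} {p : E3} (hF : DifferentiableAt ℝ F p) (i : Fin 3) :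
    dJ F i p = fderiv ℝ (fun J => F (p.1, J)) p.2 (Pi.single i 1) := by
  have h : HasFDerivAt (fun J => F (p.1, J)) ((fderiv ℝ F p).comp (.inr ℝ _ _)) p.2 :=
    hF.hasFDerivAt.comp p.2 (hasFDerivAt_prodMk_right p.1 p.2)
  rw [dJ, h.fderiv]
  rfl

theorem pi0_apply_eq_dotProduct (α : Fin 3 → ℝ) (a : ℝ) (f : (Fin 3 → ℝ) → ℝ) (x J : Fin 3 → ℝ) :
    pi0 α a f (x, J) = 1 / (2 * a ^ 2) * (J ⬝ᵥ (fun m => x m / (f x - α m)) ⨯₃ x) := by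
  rw [triple_product_permutation, pi0]
  simp only [cross_eq_crossProduct, dotProduct, mul_div_right_comm]

theorem differentiable_cross : Differentiable ℝ (fun q : E3 => cross q.1 q.2) :=
  differentiable_pi.2 fun j => by fin_cases j <;>
    simp only [cross, Fin.zero_eta, Fin.mk_one, Fin.reduceFinMk, cons_val] <;> fun_prop

theorem differentiableAt_pi0 {α : Fin 3 → ℝ} {a : ℝ} {f : (Fin 3 → ℝ) → ℝ} {p : E3}
    (hf : DifferentiableAt ℝ f p.1) (hfα : ∀ m, f p.1 - α m ≠ 0) :
    DifferentiableAt ℝ (pi0 α a f) p := by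
  have hterm (j : Fin 3) :
      DifferentiableAt ℝ (fun q : E3 => q.1 j * cross q.1 q.2 j / (f q.1 - α j)) p := by
    have hcross := differentiable_pi.1 differentiable_cross j p
    have hden : DifferentiableAt ℝ (fun q : E3 => f q.1 - α j) p :=
      (hf.comp p differentiableAt_fst).sub_const _
    have hnum : DifferentiableAt ℝ (fun q : E3 => q.1 j * cross q.1 q.2 j) p :=
      (by fun_prop : DifferentiableAt ℝ (fun q : E3 => q.1 j) p).mul hcross
    simpa only [div_eq_mul_inv] using hnum.fun_mul (hden.fun_inv (hfα j))
  exact (DifferentiableAt.fun_sum fun j _ => hterm j).const_mul _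

theorem dJ_pi0 {α : Fin 3 → ℝ} {a : ℝ} {f : (Fin 3 → ℝ) → ℝ} {p : E3}
    (hf : DifferentiableAt ℝ f p.1) (hfα : ∀ m, f p.1 - α m ≠ 0) :
    (fun l => dJ (pi0 α a f) l p) =
      (1 / (2 * a ^ 2)) • ((fun m => p.1 m / (f p.1 - α m)) ⨯₃ p.1) := by
  have hlin : HasFDerivAt
      (fun J => 1 / (2 * a ^ 2) * (J ⬝ᵥ (fun m => p.1 m / (f p.1 - α m)) ⨯₃ p.1)) _ p.2 :=
    (HasFDerivAt.fun_sum fun m _ =>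
      (ContinuousLinearMap.proj (R := ℝ) (φ := fun _ : Fin 3 => ℝ) m).hasFDerivAt.mul_const
        (((fun m => p.1 m / (f p.1 - α m)) ⨯₃ p.1) m)).const_mul _
  ext l
  rw [dJ_eq_fderiv_snd (differentiableAt_pi0 hf hfα)]
  simp_rw [pi0_apply_eq_dotProduct]
  rw [hlin.fderiv]
  simp [Pi.single_apply]

theorem liePoisson_pi0_comp_fst {α : Fin 3 → ℝ} {a : ℝ} {f g : (Fin 3 → ℝ) → ℝ} {p : E3}
    (ha : a ≠ 0) (hsph : ∑ m, p.1 m ^ 2 = a ^ 2)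
    (hf : DifferentiableAt ℝ f p.1) (hg : DifferentiableAt ℝ g p.1)
    (hfα : ∀ m, f p.1 - α m ≠ 0) (hf_root : ∑ m, p.1 m ^ 2 / (f p.1 - α m) = 0) :
    liePoisson (pi0 α a f) (fun q => g q.1) p =
      (∑ m, p.1 m / (f p.1 - α m) * fderiv ℝ g p.1 (Pi.single m 1)) / 2 := by
  set x := p.1
  set w : Fin 3 → ℝ := fun m => x m / (f x - α m)
  set G : Fin 3 → ℝ := fun m => fderiv ℝ g x (Pi.single m 1)
  have hwx : w ⬝ᵥ x = 0 := by
    simpa only [dotProduct, w, div_mul_eq_mul_div, ← sq] using hf_root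
  have hxx : x ⬝ᵥ x = a ^ 2 := by simpa only [dotProduct, ← sq] using hsph
  calc liePoisson (pi0 α a f) (fun q => g q.1) p
      = 1 / (2 * a ^ 2) * (w ⨯₃ x ⬝ᵥ G ⨯₃ x) := by
        rw [liePoisson_comp_fst _ hg, dJ_pi0 hf hfα, dotProduct_comm, triple_product_permutation,
          smul_dotProduct, smul_eq_mul]
    _ = 1 / (2 * a ^ 2) * (x ⬝ᵥ x) * (w ⬝ᵥ G) := by rw [cross_dot_cross, hwx]; ring
    _ = (w ⬝ᵥ G) / 2 := by rw [hxx]; field_simp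

theorem fderiv_single_mul_sum_eq_of_root {ι : Type*} [Fintype ι] [DecidableEq ι]
    {α : ι → ℝ} {f : (ι → ℝ) → ℝ} {x : ι → ℝ}
    (hf : DifferentiableAt ℝ f x) (hfα : ∀ n, f x - α n ≠ 0)
    (hroot : ∀ᶠ y in 𝓝 x, ∑ n, y n ^ 2 / (f y - α n) = 0) (m : ι) :
    fderiv ℝ f x (Pi.single m 1) * ∑ n, x n ^ 2 / (f x - α n) ^ 2 = 2 * x m / (f x - α m) := by
  set v : ι → ℝ := Pi.single m 1
  set γ : ℝ → ι → ℝ := fun t => x + t • v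
  have hγ : HasDerivAt γ v 0 := by
    have := ((hasDerivAt_id (0 : ℝ)).smul_const v).const_add x
    rwa [one_smul] at this
  have hγ0 : γ 0 = x := by simp [γ]
  have hfγ : HasDerivAt (fun t => f (γ t)) (fderiv ℝ f x v) 0 :=
    hf.hasFDerivAt.comp_hasDerivAt_of_eq 0 hγ hγ0.symm
  have hterm : ∀ n, HasDerivAt (fun t => γ t n ^ 2 / (f (γ t) - α n))
      ((2 * x n * v n * (f x - α n) - x n ^ 2 * fderiv ℝ f x v) / (f x - α n) ^ 2) 0 := by
    intro n
    have hγn : HasDerivAt (fun t => γ t n) (v n) 0 := hasDerivAt_pi.mp hγ n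
    refine ((hγn.fun_pow 2).fun_div (hfγ.sub_const (α n)) (by rw [hγ0]; exact hfα n)).congr_deriv ?_
    rw [hγ0]
    ring
  have hsum := HasDerivAt.fun_sum (u := Finset.univ) fun n _ => hterm n
  have hzero : (fun t => ∑ n, γ t n ^ 2 / (f (γ t) - α n)) =ᶠ[𝓝 0] fun _ => 0 :=
    (hγ0 ▸ hγ.continuousAt.tendsto : Tendsto γ (𝓝 0) (𝓝 x)).eventually hroot
  have hderiv := hsum.unique ((hasDerivAt_const 0 (0 : ℝ)).congr_of_eventuallyEq hzero)
  have hsplit : ∀ n, (2 * x n * v n * (f x - α n) - x n ^ 2 * fderiv ℝ f x v) / (f x - α n) ^ 2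
      = 2 * x n * v n / (f x - α n) - fderiv ℝ f x v * (x n ^ 2 / (f x - α n) ^ 2) := by
    intro n
    field_simp [hfα n]
  have hsingle : ∑ n, 2 * x n * v n / (f x - α n) = 2 * x m / (f x - α m) := by
    simp [v, Pi.single_apply, ite_div]
  rw [Finset.sum_congr rfl fun n _ => hsplit n, Finset.sum_sub_distrib, ← Finset.mul_sum,
    hsingle] at hderiv
  linarith

theorem sum_div_mul_eq_zero_of_roots {ι : Type*} [Fintype ι] {c α : ι → ℝ} {s t : ℝ}
    (hst : s ≠ t) (hsα : ∀ m, s - α m ≠ 0) (htα : ∀ m, t - α m ≠ 0)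
    (hs_root : ∑ m, c m / (s - α m) = 0) (ht_root : ∑ m, c m / (t - α m) = 0) :
    ∑ m, c m / ((s - α m) * (t - α m)) = 0 := by
  have hpf (m : ι) : c m / ((s - α m) * (t - α m)) =
      (c m / (t - α m) - c m / (s - α m)) / (s - t) := by
    field_simp [hsα m, htα m, sub_ne_zero.2 hst]
    ring
  simp only [hpf, ← Finset.sum_div, Finset.sum_sub_distrib, hs_root, ht_root, sub_self, zero_div]

theorem sum_sq_div_sq_pos {ι : Type*} [Fintype ι] {x α : ι → ℝ} {t : ℝ} (hx : x ≠ 0)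
    (htα : ∀ m, t - α m ≠ 0) : 0 < ∑ m, x m ^ 2 / (t - α m) ^ 2 := by
  obtain ⟨m, hm⟩ : ∃ m, x m ≠ 0 := Function.ne_iff.1 hx
  have htm := htα m
  exact Finset.sum_pos' (fun n _ => by positivity) ⟨m, Finset.mem_univ _, by positivity⟩

theorem sum_div_mul_fderiv_single_eq_ite {ι : Type*} [Fintype ι] [DecidableEq ι]
    {α : ι → ℝ} {g : (ι → ℝ) → ℝ} {x : ι → ℝ} {s : ℝ} (hx : x ≠ 0)
    (hg : DifferentiableAt ℝ g x) (hgα : ∀ m, g x - α m ≠ 0)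
    (hg_root : ∀ᶠ y in 𝓝 x, ∑ m, y m ^ 2 / (g y - α m) = 0)
    (hsα : ∀ m, s - α m ≠ 0) (hs_root : ∑ m, x m ^ 2 / (s - α m) = 0) :
    ∑ m, x m / (s - α m) * fderiv ℝ g x (Pi.single m 1) = if s = g x then 2 else 0 := by
  set D := ∑ m, x m ^ 2 / (g x - α m) ^ 2
  have hD : D ≠ 0 := (sum_sq_div_sq_pos hx hgα).ne'
  have hgrad (m : ι) : fderiv ℝ g x (Pi.single m 1) = 2 * x m / (g x - α m) / D := by
    rw [eq_div_iff hD]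
    exact fderiv_single_mul_sum_eq_of_root hg hgα hg_root m
  have hsum : ∑ m, x m / (s - α m) * fderiv ℝ g x (Pi.single m 1) =
      2 * (∑ m, x m ^ 2 / ((s - α m) * (g x - α m))) / D := by
    simp only [hgrad, Finset.mul_sum, Finset.sum_div]
    refine Finset.sum_congr rfl fun m _ => ?_
    field_simp [hsα m, hgα m]
  rw [hsum]
  split_ifs with hst
  · subst hst
    simp only [← sq]
    field_simp
    rfl
  · rw [sum_div_mul_eq_zero_of_roots hst hsα hgα hs_root hg_root.self_of_nhds, mul_zero, zero_div]

theorem elliptic_darboux_uu_piu_general (α : Fin 3 → ℝ) (a : ℝ) (ha : 0 < a)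
    (V : Set (Fin 3 → ℝ)) (hV : IsOpen V)
    (u : Fin 2 → (Fin 3 → ℝ) → ℝ)
    (hu : ∀ i, ContDiffOn ℝ 1 (u i) V)
    (hrange : ∀ x ∈ V,
      α 0 < u 0 x ∧ u 0 x < α 1 ∧ α 1 < u 1 x ∧ u 1 x < α 2)
    (hroot : ∀ x ∈ V, ∀ i : Fin 2, ∑ j, (x j) ^ 2 / (u i x - α j) = 0) :
    (∀ p : E3, p.1 ∈ V →
      liePoisson (fun q => u 0 q.1) (fun q => u 1 q.1) p = 0) ∧
    (∀ p : E3, p.1 ∈ V → ∑ j, (p.1 j) ^ 2 = a ^ 2 → ∀ i j : Fin 2,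
      liePoisson (pi0 α a (u i)) (fun q => u j q.1) p =
        if i = j then 1 else 0) := by
  have hdiff (i : Fin 2) {x : Fin 3 → ℝ} (hx : x ∈ V) : DifferentiableAt ℝ (u i) x :=
    ((hu i).differentiableOn one_ne_zero).differentiableAt (hV.mem_nhds hx)
  have hα {x : Fin 3 → ℝ} (hx : x ∈ V) (i : Fin 2) (m : Fin 3) : u i x - α m ≠ 0 := by
    obtain ⟨h0, h1, h2, h3⟩ := hrange x hx
    rw [sub_ne_zero]
    fin_cases i <;> fin_cases m <;> simp only [Fin.zero_eta, Fin.mk_one, Fin.reduceFinMk] <;>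
      intro h <;> linarith
  have hinj {x : Fin 3 → ℝ} (hx : x ∈ V) (i j : Fin 2) : u i x = u j x ↔ i = j := by
    obtain ⟨-, h1, h2, -⟩ := hrange x hx
    have h01 : u 0 x ≠ u 1 x := (h1.trans h2).ne
    fin_cases i <;> fin_cases j <;> simp [h01, h01.symm]
  refine ⟨fun p hp => liePoisson_comp_fst_comp_fst (hdiff 0 hp) (hdiff 1 hp), ?_⟩
  intro p hp hsph i j
  have hx : p.1 ≠ 0 := fun hx0 => (pow_pos ha 2).ne (by simpa [hx0] using hsph)
  have hroot_near : ∀ᶠ y in 𝓝 p.1, ∑ m, y m ^ 2 / (u j y - α m) = 0 :=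
    eventually_of_mem (hV.mem_nhds hp) fun y hy => hroot y hy j
  rw [liePoisson_pi0_comp_fst ha.ne' hsph (hdiff i hp) (hdiff j hp) (hα hp i) (hroot _ hp i),
    sum_div_mul_fderiv_single_eq_ite hx (hdiff j hp) (hα hp j) hroot_near (hα hp i)
      (hroot _ hp i)]
  simp only [hinj hp]
  split_ifs <;> norm_num

/-- Let `V ⊆ {x : x₁x₂x₃ ≠ 0}` be open and let
`u₁, u₂ : V → ℝ` be `C¹` elliptic coordinates on `V` (roots of
`Σ_j x_j²/(u_i − α_j) = 0` with `α₁ < u₁ < α₂ < u₂ < α₃`).  Then, viewing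
`u₁, u₂` as functions on `V × ℝ³` independent of `J`, one has `{u₁, u₂} = 0` on
`V × ℝ³`, and `{π_i⁰, u_j} = δ_{ij}` at every `(x,J) ∈ V × ℝ³` with
`|x|² = a²`, where `π_i⁰ = (1/(2a²)) Σ_j x_j (x ∧ J)_j/(u_i(x) − α_j)`. -/
theorem elliptic_darboux_uu_piu (α : Fin 3 → ℝ) (h01 : α 0 < α 1)
    (h12 : α 1 < α 2) (a : ℝ) (ha : 0 < a)
    (V : Set (Fin 3 → ℝ)) (hV : IsOpen V)
    (hVsub : ∀ x ∈ V, x 0 * x 1 * x 2 ≠ 0)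
    (u : Fin 2 → (Fin 3 → ℝ) → ℝ)
    (hu : ∀ i, ContDiffOn ℝ 1 (u i) V)
    (hrange : ∀ x ∈ V,
      α 0 < u 0 x ∧ u 0 x < α 1 ∧ α 1 < u 1 x ∧ u 1 x < α 2)
    (hroot : ∀ x ∈ V, ∀ i : Fin 2, ∑ j, (x j) ^ 2 / (u i x - α j) = 0) :
    (∀ p : E3, p.1 ∈ V →
      liePoisson (fun q => u 0 q.1) (fun q => u 1 q.1) p = 0) ∧
    (∀ p : E3, p.1 ∈ V → ∑ j, (p.1 j) ^ 2 = a ^ 2 → ∀ i j : Fin 2,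
      liePoisson (pi0 α a (u i)) (fun q => u j q.1) p =
        if i = j then 1 else 0) :=
  elliptic_darboux_uu_piu_general α a ha V hV u hu hrange hroot
end

section
/- Let α₁ < α₂ < α₃ be real, a > 0, φ(λ) = (λ−α₁)(λ−α₂)(λ−α₃). Let (x, J) ∈ ℝ³ × ℝ³ satisfy x₁x₂x₃ ≠ 0 and |x|² = a², let u₁ ∈ (α₁, α₂), u₂ ∈ (α₂, α₃) be the roots of Σ_{j=1}^{3} x_j²/(λ − α_j) = 0, and set π_i⁰ = (1/(2a²)) Σ_{j=1}^{3} x_j (x ∧ J)_j/(u_i − α_j). Define the vector z ∈ ℝ³ by z_j = (2 x_j/(u₁ − u₂)) ( φ(u₁) π₁⁰/(α_j − u₁) − φ(u₂) π₂⁰/(α_j − u₂) ). Then z = x ∧ J, and consequently J_j = a⁻² ( ⟨x, J⟩ x_j + (z ∧ x)_j ) for j = 1, 2, 3. -/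
/-!
Statement 14: the `J`-part of the inverse transformation from the elliptic
variables back to `e*(3)`: the vector `z` with components
`z_j = (2x_j/(u₁−u₂))(φ(u₁)π₁⁰/(α_j−u₁) − φ(u₂)π₂⁰/(α_j−u₂))` equals `x ∧ J`,
and hence `J_j = a⁻²(⟨x,J⟩ x_j + (z ∧ x)_j)`.
-/

set_option maxHeartbeats 2000000 in
/-- Let `α₁ < α₂ < α₃`, `a > 0`, `x₁x₂x₃ ≠ 0`, `|x|² = a²`,
let `u₁ ∈ (α₁,α₂)`, `u₂ ∈ (α₂,α₃)` be the roots of `Σ_j x_j²/(λ−α_j) = 0`,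
and `π_i⁰ = (1/(2a²)) Σ_j x_j (x∧J)_j/(u_i−α_j)`.  Define
`z_j = (2x_j/(u₁−u₂))(φ(u₁)π₁⁰/(α_j−u₁) − φ(u₂)π₂⁰/(α_j−u₂))` with
`φ(λ) = (λ−α₁)(λ−α₂)(λ−α₃)`.  Then `z = x ∧ J` and
`J_j = a⁻²(⟨x,J⟩ x_j + (z ∧ x)_j)` for `j = 1,2,3`. -/
theorem elliptic_inverse_J
    (α₁ α₂ α₃ a x₁ x₂ x₃ J₁ J₂ J₃ u₁ u₂ π₁ π₂ z₁ z₂ z₃ : ℝ)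
    (h12 : α₁ < α₂) (h23 : α₂ < α₃) (ha : 0 < a)
    (hx : x₁ * x₂ * x₃ ≠ 0)
    (hnorm : x₁ ^ 2 + x₂ ^ 2 + x₃ ^ 2 = a ^ 2)
    (hu₁ : α₁ < u₁) (hu₁' : u₁ < α₂) (hu₂ : α₂ < u₂) (hu₂' : u₂ < α₃)
    (hr₁ : x₁ ^ 2 / (u₁ - α₁) + x₂ ^ 2 / (u₁ - α₂) + x₃ ^ 2 / (u₁ - α₃) = 0)
    (hr₂ : x₁ ^ 2 / (u₂ - α₁) + x₂ ^ 2 / (u₂ - α₂) + x₃ ^ 2 / (u₂ - α₃) = 0)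
    (hπ₁ : π₁ = 1 / (2 * a ^ 2) *
      (x₁ * (x₂ * J₃ - x₃ * J₂) / (u₁ - α₁) +
       x₂ * (x₃ * J₁ - x₁ * J₃) / (u₁ - α₂) +
       x₃ * (x₁ * J₂ - x₂ * J₁) / (u₁ - α₃)))
    (hπ₂ : π₂ = 1 / (2 * a ^ 2) *
      (x₁ * (x₂ * J₃ - x₃ * J₂) / (u₂ - α₁) +
       x₂ * (x₃ * J₁ - x₁ * J₃) / (u₂ - α₂) +
       x₃ * (x₁ * J₂ - x₂ * J₁) / (u₂ - α₃)))
    (hz₁ : z₁ = 2 * x₁ / (u₁ - u₂) *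
      ((u₁ - α₁) * (u₁ - α₂) * (u₁ - α₃) * π₁ / (α₁ - u₁) -
       (u₂ - α₁) * (u₂ - α₂) * (u₂ - α₃) * π₂ / (α₁ - u₂)))
    (hz₂ : z₂ = 2 * x₂ / (u₁ - u₂) *
      ((u₁ - α₁) * (u₁ - α₂) * (u₁ - α₃) * π₁ / (α₂ - u₁) -
       (u₂ - α₁) * (u₂ - α₂) * (u₂ - α₃) * π₂ / (α₂ - u₂)))
    (hz₃ : z₃ = 2 * x₃ / (u₁ - u₂) *
      ((u₁ - α₁) * (u₁ - α₂) * (u₁ - α₃) * π₁ / (α₃ - u₁) -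
       (u₂ - α₁) * (u₂ - α₂) * (u₂ - α₃) * π₂ / (α₃ - u₂))) :
    (z₁ = x₂ * J₃ - x₃ * J₂ ∧ z₂ = x₃ * J₁ - x₁ * J₃ ∧
      z₃ = x₁ * J₂ - x₂ * J₁) ∧
    (J₁ = (a ^ 2)⁻¹ * ((x₁ * J₁ + x₂ * J₂ + x₃ * J₃) * x₁ +
        (z₂ * x₃ - z₃ * x₂)) ∧
     J₂ = (a ^ 2)⁻¹ * ((x₁ * J₁ + x₂ * J₂ + x₃ * J₃) * x₂ +
        (z₃ * x₁ - z₁ * x₃)) ∧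
     J₃ = (a ^ 2)⁻¹ * ((x₁ * J₁ + x₂ * J₂ + x₃ * J₃) * x₃ +
        (z₁ * x₂ - z₂ * x₁))) := by
  have hdu : u₁ - u₂ ≠ 0 := ne_of_lt (by linarith)
  have d11 : u₁ - α₁ ≠ 0 := ne_of_gt (by linarith)
  have d12 : u₁ - α₂ ≠ 0 := ne_of_lt (by linarith)
  have d13 : u₁ - α₃ ≠ 0 := ne_of_lt (by linarith)
  have d21 : u₂ - α₁ ≠ 0 := ne_of_gt (by linarith)
  have d22 : u₂ - α₂ ≠ 0 := ne_of_gt (by linarith)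
  have d23 : u₂ - α₃ ≠ 0 := ne_of_lt (by linarith)
  have c11 : α₁ - u₁ ≠ 0 := ne_of_lt (by linarith)
  have c12 : α₂ - u₁ ≠ 0 := ne_of_gt (by linarith)
  have c13 : α₃ - u₁ ≠ 0 := ne_of_gt (by linarith)
  have c21 : α₁ - u₂ ≠ 0 := ne_of_lt (by linarith)
  have c22 : α₂ - u₂ ≠ 0 := ne_of_lt (by linarith)
  have c23 : α₃ - u₂ ≠ 0 := ne_of_gt (by linarith)
  have a12 : α₁ - α₂ ≠ 0 := ne_of_lt (by linarith)
  have a13 : α₁ - α₃ ≠ 0 := ne_of_lt (by linarith)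
  have a23 : α₂ - α₃ ≠ 0 := ne_of_lt (by linarith)
  have ha2 : a ^ 2 ≠ 0 := by positivity
  have E₁ : x₁ ^ 2 * ((u₁ - α₂) * (u₁ - α₃)) + x₂ ^ 2 * ((u₁ - α₁) * (u₁ - α₃))
      + x₃ ^ 2 * ((u₁ - α₁) * (u₁ - α₂)) = 0 := by
    have h := hr₁
    field_simp at h
    linear_combination h
  have E₂ : x₁ ^ 2 * ((u₂ - α₂) * (u₂ - α₃)) + x₂ ^ 2 * ((u₂ - α₁) * (u₂ - α₃))
      + x₃ ^ 2 * ((u₂ - α₁) * (u₂ - α₂)) = 0 := by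
    have h := hr₂
    field_simp at h
    linear_combination h
  have e₁ : x₁ ^ 2 * ((α₁ - α₂) * (α₁ - α₃)) = a ^ 2 * ((α₁ - u₁) * (α₁ - u₂)) := by
    have h : (u₁ - u₂) * (x₁ ^ 2 * ((α₁ - α₂) * (α₁ - α₃)) - a ^ 2 * ((α₁ - u₁) * (α₁ - u₂))) = 0 := by
      linear_combination (-(u₂ - α₁)) * E₁ + (u₁ - α₁) * E₂ + ((u₁ - u₂) * (α₁ - u₁) * (α₁ - u₂)) * hnorm
    have := mul_eq_zero.mp h
    rcases this with h' | h'
    · exact absurd h' hdu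
    · linarith
  have e₂ : x₂ ^ 2 * ((α₂ - α₁) * (α₂ - α₃)) = a ^ 2 * ((α₂ - u₁) * (α₂ - u₂)) := by
    have h : (u₁ - u₂) * (x₂ ^ 2 * ((α₂ - α₁) * (α₂ - α₃)) - a ^ 2 * ((α₂ - u₁) * (α₂ - u₂))) = 0 := by
      linear_combination (-(u₂ - α₂)) * E₁ + (u₁ - α₂) * E₂ + ((u₁ - u₂) * (α₂ - u₁) * (α₂ - u₂)) * hnorm
    rcases mul_eq_zero.mp h with h' | h'
    · exact absurd h' hdu
    · linarith
  have e₃ : x₃ ^ 2 * ((α₃ - α₁) * (α₃ - α₂)) = a ^ 2 * ((α₃ - u₁) * (α₃ - u₂)) := by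
    have h : (u₁ - u₂) * (x₃ ^ 2 * ((α₃ - α₁) * (α₃ - α₂)) - a ^ 2 * ((α₃ - u₁) * (α₃ - u₂))) = 0 := by
      linear_combination (-(u₂ - α₃)) * E₁ + (u₁ - α₃) * E₂ + ((u₁ - u₂) * (α₃ - u₁) * (α₃ - u₂)) * hnorm
    rcases mul_eq_zero.mp h with h' | h'
    · exact absurd h' hdu
    · linarith
  have D1 : a ^ 2 * ((α₁ - u₁) * (α₁ - u₂)) ≠ 0 := by
    exact mul_ne_zero ha2 (mul_ne_zero c11 c21)
  have D2 : a ^ 2 * ((α₂ - u₁) * (α₂ - u₂)) ≠ 0 := by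
    exact mul_ne_zero ha2 (mul_ne_zero c12 c22)
  have D3 : a ^ 2 * ((α₃ - u₁) * (α₃ - u₂)) ≠ 0 := by
    exact mul_ne_zero ha2 (mul_ne_zero c13 c23)
  have step₁ : z₁ = (x₂ * J₃ - x₃ * J₂) * (x₁ ^ 2 * ((α₁ - α₂) * (α₁ - α₃)))
      / (a ^ 2 * ((α₁ - u₁) * (α₁ - u₂))) := by
    rw [hz₁, hπ₁, hπ₂]
    field_simp
    ring
  have step₂ : z₂ = (x₃ * J₁ - x₁ * J₃) * (x₂ ^ 2 * ((α₂ - α₁) * (α₂ - α₃)))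
      / (a ^ 2 * ((α₂ - u₁) * (α₂ - u₂))) := by
    rw [hz₂, hπ₁, hπ₂]
    field_simp
    ring
  have step₃ : z₃ = (x₁ * J₂ - x₂ * J₁) * (x₃ ^ 2 * ((α₃ - α₁) * (α₃ - α₂)))
      / (a ^ 2 * ((α₃ - u₁) * (α₃ - u₂))) := by
    rw [hz₃, hπ₁, hπ₂]
    field_simp
    ring
  have w₁ : z₁ = x₂ * J₃ - x₃ * J₂ := by
    rw [step₁, e₁, mul_div_assoc, div_self D1, mul_one]
  have w₂ : z₂ = x₃ * J₁ - x₁ * J₃ := by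
    rw [step₂, e₂, mul_div_assoc, div_self D2, mul_one]
  have w₃ : z₃ = x₁ * J₂ - x₂ * J₁ := by
    rw [step₃, e₃, mul_div_assoc, div_self D3, mul_one]
  refine ⟨⟨w₁, w₂, w₃⟩, ?_, ?_, ?_⟩
  · rw [w₂, w₃, show (x₁ * J₁ + x₂ * J₂ + x₃ * J₃) * x₁ +
        ((x₃ * J₁ - x₁ * J₃) * x₃ - (x₁ * J₂ - x₂ * J₁) * x₂)
        = (x₁ ^ 2 + x₂ ^ 2 + x₃ ^ 2) * J₁ from by ring, hnorm]
    field_simp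
  · rw [w₁, w₃, show (x₁ * J₁ + x₂ * J₂ + x₃ * J₃) * x₂ +
        ((x₁ * J₂ - x₂ * J₁) * x₁ - (x₂ * J₃ - x₃ * J₂) * x₃)
        = (x₁ ^ 2 + x₂ ^ 2 + x₃ ^ 2) * J₂ from by ring, hnorm]
    field_simp
  · rw [w₁, w₂, show (x₁ * J₁ + x₂ * J₂ + x₃ * J₃) * x₃ +
        ((x₂ * J₃ - x₃ * J₂) * x₂ - (x₃ * J₁ - x₁ * J₃) * x₁)
        = (x₁ ^ 2 + x₂ ^ 2 + x₃ ^ 2) * J₃ from by ring, hnorm]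
    field_simp
end
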